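/- Let f_h and f_l be likelihood-ratio experiments on [a_h,b_h] and [a_l,b_l] with 0 ≤ a_h < a_l < b_l < b_h ≤ ∞ satisfying, for each state s ∈ {0,1} and ℓ ∈ (a_l,b_l), f_{l,s}(ℓ)/F_{l,s}(ℓ) > f_{h,s}(ℓ)/F_{h,s}(ℓ) and f_{l,s}(ℓ)/(1−F_{l,s}(ℓ)) > f_{h,s}(ℓ)/(1−F_{h,s}(ℓ)). Fix p ∈ (0,1) and μ, μ′ ∈ [1/2,1) with μ < μ′. Suppose that at both μ and μ′ the crossing beliefs satisfy β†_1 < β†_0, and let β_μ and β_{μ′} be the unique solutions of the indifference equation at μ and μ′ respectively. Then β_μ < β_{μ′}. -/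

import Mathlib

open MeasureTheory Set

/-- State-0 CDF of a likelihood-ratio experiment. -/
noncomputable def F0 (f : ℝ → ℝ) (ℓ : ℝ) : ℝ := ∫ u in (0:ℝ)..ℓ, f u

/-- State-1 CDF of a likelihood-ratio experiment. -/
noncomputable def F1 (f : ℝ → ℝ) (ℓ : ℝ) : ℝ := ∫ u in (0:ℝ)..ℓ, u * f u

/-- State-`s` CDF, `s ∈ {0,1}`. -/
noncomputable def Fs (f : ℝ → ℝ) (s : Fin 2) (ℓ : ℝ) : ℝ :=
  if s = 0 then F0 f ℓ else F1 f ℓ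

/-- State-`s` density, `s ∈ {0,1}`: `f` in state 0 and `ℓ·f(ℓ)` in state 1. -/
noncomputable def fs (f : ℝ → ℝ) (s : Fin 2) (ℓ : ℝ) : ℝ :=
  if s = 0 then f ℓ else ℓ * f ℓ

/-- A likelihood-ratio experiment on `[a, b]` with `0 ≤ a < b ≤ ∞`. -/
structure IsLRExperiment (f : ℝ → ℝ) (a : ℝ) (b : EReal) : Prop where
  a_nonneg : 0 ≤ a
  a_lt_b : (a : EReal) < b
  cont : Continuous f
  pos : ∀ ℓ : ℝ, a < ℓ → (ℓ : EReal) < b → 0 < f ℓ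
  zero_outside : ∀ ℓ : ℝ, (ℓ < a ∨ b < (ℓ : EReal)) → f ℓ = 0
  int_one : (∫ ℓ in Ioi (0:ℝ), f ℓ) = 1
  int_mean : (∫ ℓ in Ioi (0:ℝ), ℓ * f ℓ) = 1

/-- The low type's experiment is noisier: reverse-hazard-rate and hazard-rate dominance
in each state on the interior of the low type's support. -/
def Noisier (fh fl : ℝ → ℝ) (a_l b_l : ℝ) : Prop :=
  ∀ s : Fin 2, ∀ ℓ : ℝ, a_l < ℓ → ℓ < b_l →
    fs fl s ℓ / Fs fl s ℓ > fs fh s ℓ / Fs fh s ℓ ∧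
    fs fl s ℓ / (1 - Fs fl s ℓ) > fs fh s ℓ / (1 - Fs fh s ℓ)

/-- Likelihood-ratio cutoff corresponding to belief `β` under prior `μ`. -/
noncomputable def zOf (μ β : ℝ) : ℝ := (1 - μ) * β / (μ * (1 - β))

/-- Distribution of the posterior state belief conditional on state `s`. -/
noncomputable def H (f : ℝ → ℝ) (μ : ℝ) (s : Fin 2) (β : ℝ) : ℝ :=
  Fs f s (zOf μ β)

/-- Posterior belief induced by likelihood ratio `x` under prior `μ`. -/
noncomputable def betaOf (μ x : ℝ) : ℝ := μ * x / (μ * x + 1 - μ)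

/-- `βd` is the crossing belief in state `s`: it lies in `(β̲_l, β̄_l)` and
`H_{h,s} − H_{l,s}` is positive below it, zero at it, and negative above it on the high
type's belief range (expressed via `betaOf μ a_h < β`, `β < 1`, `z(β) < b_h`). -/
def IsCrossingBelief (fh fl : ℝ → ℝ) (a_h a_l b_l : ℝ) (b_h : EReal)
    (μ : ℝ) (s : Fin 2) (βd : ℝ) : Prop :=
  βd ∈ Set.Ioo (betaOf μ a_l) (betaOf μ b_l) ∧
  ∀ β : ℝ, betaOf μ a_h < β → β < 1 → ((zOf μ β : ℝ) : EReal) < b_h →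
    ((β < βd → H fh μ s β - H fl μ s β > 0) ∧
     (β = βd → H fh μ s β - H fl μ s β = 0) ∧
     (βd < β → H fh μ s β - H fl μ s β < 0))

/-- Left side of the indifference equation: the sender's expected reputational gain from
report 1 over report 0, at state belief `β`, when the market conjectures the `β`-cutoff
strategy profile. -/
noncomputable def indiffLHS (fh fl : ℝ → ℝ) (μ p β : ℝ) : ℝ :=
  β * ((1 - H fh μ 1 β) / (p * (1 - H fh μ 1 β) + (1 - p) * (1 - H fl μ 1 β))
      - H fh μ 1 β / (p * H fh μ 1 β + (1 - p) * H fl μ 1 β))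

/-- Right side of the indifference equation. -/
noncomputable def indiffRHS (fh fl : ℝ → ℝ) (μ p β : ℝ) : ℝ :=
  (1 - β) * (H fh μ 0 β / (p * H fh μ 0 β + (1 - p) * H fl μ 0 β)
      - (1 - H fh μ 0 β) / (p * (1 - H fh μ 0 β) + (1 - p) * (1 - H fl μ 0 β)))

/-!
Pass from the belief cutoff `β` to the likelihood-ratio cutoff `z = zOf μ β`. In these
coordinates the crossing points of `H_{h,s}` and `H_{l,s}` are the points where `F_{h,s}` and
`F_{l,s}` cross, which do not depend on the prior, and the indifference equation says that the
odds `β / (1 - β)` equal `indiffOdds z`, a function of `z` alone. Hazard-rate dominance makes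
`F_{l,s} / F_{h,s}` increasing and `(1 - F_{l,s}) / (1 - F_{h,s})` decreasing, so between the
crossings the state-1 gain increases, the state-0 gain decreases, and `indiffOdds` is strictly
decreasing. If `β_{μ'} ≤ β_μ`, then `zOf μ' β_{μ'} < zOf μ β_μ` because `zOf` decreases in the
prior, so the odds of `β_{μ'}` would exceed those of `β_μ`: a contradiction.
-/

theorem Fs_eq_intervalIntegral (f : ℝ → ℝ) (s : Fin 2) (z : ℝ) :
    Fs f s z = ∫ u in (0 : ℝ)..z, fs f s u := by
  unfold Fs F0 F1 fs
  split <;> rfl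

namespace IsLRExperiment

variable {f : ℝ → ℝ} {a : ℝ} {b : EReal}

theorem nonneg (h : IsLRExperiment f a b) (x : ℝ) : 0 ≤ f x := by
  have hoff : ∀ y ∈ (univ \ {a, b.toReal} : Set ℝ), 0 ≤ f y := by
    rintro y ⟨-, hy⟩
    simp only [mem_insert_iff, mem_singleton_iff, not_or] at hy
    rcases lt_or_gt_of_ne hy.1 with hya | hay
    · exact (h.zero_outside y (Or.inl hya)).ge
    rcases lt_trichotomy (y : EReal) b with hyb | hyb | hyb
    · exact (h.pos y hay hyb).le
    · exact absurd (by rw [← hyb, EReal.toReal_coe]) hy.2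
    · exact (h.zero_outside y (Or.inr hyb)).ge
  have hdense : Dense (univ \ {a, b.toReal} : Set ℝ) := dense_univ.sdiff_finite (toFinite _)
  have hx : x ∈ closure (univ \ {a, b.toReal} : Set ℝ) := by rw [hdense.closure_eq]; trivial
  exact (isClosed_le continuous_const h.cont).closure_subset_iff.2 hoff hx

theorem fs_nonneg (h : IsLRExperiment f a b) (s : Fin 2) {ℓ : ℝ} (hℓ : 0 ≤ ℓ) :
    0 ≤ fs f s ℓ := by
  unfold fs
  split
  · exact h.nonneg ℓ
  · exact mul_nonneg hℓ (h.nonneg ℓ)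

theorem fs_pos (h : IsLRExperiment f a b) (s : Fin 2) {ℓ : ℝ} (haℓ : a < ℓ)
    (hℓb : (ℓ : EReal) < b) : 0 < fs f s ℓ := by
  unfold fs
  split
  · exact h.pos ℓ haℓ hℓb
  · exact mul_pos (h.a_nonneg.trans_lt haℓ) (h.pos ℓ haℓ hℓb)

theorem continuous_fs (h : IsLRExperiment f a b) (s : Fin 2) : Continuous (fs f s) := by
  unfold fs
  split
  · exact h.cont
  · exact continuous_id.mul h.cont

theorem hasDerivAt_Fs (h : IsLRExperiment f a b) (s : Fin 2) (z : ℝ) :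
    HasDerivAt (Fs f s) (fs f s z) z := by
  have hc := h.continuous_fs s
  rw [show Fs f s = fun z => ∫ u in (0 : ℝ)..z, fs f s u from funext (Fs_eq_intervalIntegral f s)]
  exact intervalIntegral.integral_hasDerivAt_right (hc.intervalIntegrable _ _)
    hc.aestronglyMeasurable.stronglyMeasurableAtFilter hc.continuousAt

theorem intervalIntegral_fs_nonneg (h : IsLRExperiment f a b) (s : Fin 2) {c d : ℝ}
    (hc : 0 ≤ c) (hcd : c ≤ d) : 0 ≤ ∫ u in c..d, fs f s u :=
  intervalIntegral.integral_nonneg hcd fun _ hu => h.fs_nonneg s (hc.trans hu.1)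

theorem intervalIntegral_fs_pos (h : IsLRExperiment f a b) (s : Fin 2) {c d : ℝ}
    (hac : a ≤ c) (hcd : c < d) (hdb : (d : EReal) ≤ b) : 0 < ∫ u in c..d, fs f s u :=
  intervalIntegral.intervalIntegral_pos_of_pos_on ((h.continuous_fs s).intervalIntegrable _ _)
    (fun _ hu => h.fs_pos s (hac.trans_lt hu.1) ((EReal.coe_lt_coe_iff.2 hu.2).trans_le hdb)) hcd

theorem Fs_pos (h : IsLRExperiment f a b) (s : Fin 2) {z : ℝ} (hz : a < z) : 0 < Fs f s z := by
  obtain ⟨d, had, hdb⟩ := EReal.lt_iff_exists_real_btwn.1 h.a_lt_b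
  set d' := min d z
  have hi : ∀ c c', IntervalIntegrable (fs f s) volume c c' := fun _ _ =>
    (h.continuous_fs s).intervalIntegrable _ _
  have hsplit : Fs f s z = (∫ u in (0 : ℝ)..a, fs f s u) + (∫ u in a..d', fs f s u)
      + ∫ u in d'..z, fs f s u := by
    rw [intervalIntegral.integral_add_adjacent_intervals (hi _ _) (hi _ _),
      intervalIntegral.integral_add_adjacent_intervals (hi _ _) (hi _ _), Fs_eq_intervalIntegral]
  have had' : a < d' := lt_min (EReal.coe_lt_coe_iff.1 had) hz
  rw [hsplit]
  have := h.intervalIntegral_fs_nonneg s le_rfl h.a_nonneg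
  have := h.intervalIntegral_fs_nonneg s (h.a_nonneg.trans had'.le) (min_le_right d z)
  have := h.intervalIntegral_fs_pos s le_rfl had'
    ((EReal.coe_le_coe_iff.2 (min_le_left d z)).trans hdb.le)
  linarith

theorem setIntegral_fs (h : IsLRExperiment f a b) (s : Fin 2) :
    ∫ ℓ in Ioi 0, fs f s ℓ = 1 := by
  unfold fs
  split
  · exact h.int_one
  · exact h.int_mean

theorem integrableOn_fs (h : IsLRExperiment f a b) (s : Fin 2) :
    IntegrableOn (fs f s) (Ioi 0) := by
  by_contra hint
  simpa [integral_undef hint] using h.setIntegral_fs s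

theorem Fs_lt_one (h : IsLRExperiment f a b) (s : Fin 2) {z : ℝ} (hz0 : 0 ≤ z)
    (hzb : (z : EReal) < b) : Fs f s z < 1 := by
  have hint := h.integrableOn_fs s
  have hsplit : Fs f s z + ∫ ℓ in Ioi z, fs f s ℓ = 1 := by
    rw [← h.setIntegral_fs s, ← Ioc_union_Ioi_eq_Ioi hz0,
      setIntegral_union (Ioc_disjoint_Ioi le_rfl) measurableSet_Ioi
        (hint.mono_set Ioc_subset_Ioi_self) (hint.mono_set (Ioi_subset_Ioi hz0)),
      Fs_eq_intervalIntegral, intervalIntegral.integral_of_le hz0]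
  set c := max z a
  obtain ⟨d, hcd, hdb⟩ := EReal.lt_iff_exists_real_btwn.1 (max_lt hzb h.a_lt_b)
  have hcd : c < d := EReal.coe_lt_coe_iff.1 hcd
  have htail : 0 < ∫ ℓ in Ioi z, fs f s ℓ := by
    calc 0 < ∫ u in c..d, fs f s u := h.intervalIntegral_fs_pos s (le_max_right z a) hcd hdb.le
      _ = ∫ ℓ in Ioc c d, fs f s ℓ := intervalIntegral.integral_of_le hcd.le
      _ ≤ ∫ ℓ in Ioi z, fs f s ℓ := by
        refine setIntegral_mono_set (hint.mono_set (Ioi_subset_Ioi hz0)) ?_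
          (Filter.Eventually.of_forall fun x hx => (le_max_left z a).trans_lt hx.1)
        filter_upwards [ae_restrict_mem measurableSet_Ioi] with x hx
        exact h.fs_nonneg s (hz0.trans hx.le)
  linarith

theorem Fs_mem_Ioo (h : IsLRExperiment f a b) (s : Fin 2) {a' b' : ℝ} (ha : a ≤ a')
    (hb : (b' : EReal) ≤ b) {z : ℝ} (hz : z ∈ Ioo a' b') : Fs f s z ∈ Ioo 0 1 :=
  ⟨h.Fs_pos s (ha.trans_lt hz.1),
    h.Fs_lt_one s (h.a_nonneg.trans (ha.trans hz.1.le)) ((EReal.coe_lt_coe_iff.2 hz.2).trans_le hb)⟩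

end IsLRExperiment

section BeliefLikelihood

variable {μ : ℝ}

theorem betaOf_mem_Ico (hμ0 : 0 < μ) (hμ1 : μ < 1) {x : ℝ} (hx : 0 ≤ x) :
    betaOf μ x ∈ Ico 0 1 := by
  have hden : 0 < μ * x + 1 - μ := by nlinarith
  exact ⟨div_nonneg (by positivity) hden.le, (div_lt_one hden).2 (by linarith)⟩

theorem zOf_betaOf (hμ0 : 0 < μ) (hμ1 : μ < 1) {x : ℝ} (hx : 0 ≤ x) :
    zOf μ (betaOf μ x) = x := by
  have hden : 0 < μ * x + 1 - μ := by nlinarith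
  have h1μ : 1 - μ ≠ 0 := by linarith
  rw [zOf, betaOf, one_sub_div hden.ne', show μ * x + 1 - μ - μ * x = 1 - μ by ring]
  field_simp

theorem zOf_strictMonoOn (hμ0 : 0 < μ) (hμ1 : μ < 1) : StrictMonoOn (zOf μ) (Ico 0 1) := by
  intro β hβ β' hβ' hlt
  rw [zOf, zOf, div_lt_div_iff₀ (by nlinarith [hβ.2]) (by nlinarith [hβ'.2])]
  nlinarith [mul_pos (mul_pos hμ0 (sub_pos.2 hμ1)) (sub_pos.2 hlt)]

theorem zOf_lt_zOf_of_lt {μ' β : ℝ} (hμ0 : 0 < μ) (hμμ' : μ < μ') (hβ : β ∈ Ioo 0 1) :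
    zOf μ' β < zOf μ β := by
  rw [zOf, zOf, div_lt_div_iff₀ (by nlinarith [hβ.2]) (by nlinarith [hβ.2])]
  nlinarith [mul_pos (mul_pos hβ.1 (sub_pos.2 hβ.2)) (sub_pos.2 hμμ')]

theorem zOf_mem_Ioo (hμ0 : 0 < μ) (hμ1 : μ < 1) {β β₁ β₀ : ℝ} (h₁ : β₁ ∈ Ico 0 1)
    (h₀ : β₀ ∈ Ico 0 1) (hβ : β ∈ Ioo β₁ β₀) : zOf μ β ∈ Ioo (zOf μ β₁) (zOf μ β₀) :=
  have hβ' : β ∈ Ico 0 1 := ⟨h₁.1.trans hβ.1.le, hβ.2.trans h₀.2⟩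
  ⟨zOf_strictMonoOn hμ0 hμ1 h₁ hβ' hβ.1, zOf_strictMonoOn hμ0 hμ1 hβ' h₀ hβ.2⟩

end BeliefLikelihood

namespace IsCrossingBelief

variable {fh fl : ℝ → ℝ} {a_h a_l b_l : ℝ} {b_h : EReal} {μ : ℝ} {s s' : Fin 2} {βd βd' : ℝ}

theorem mem_Ico (hc : IsCrossingBelief fh fl a_h a_l b_l b_h μ s βd) (hμ0 : 0 < μ) (hμ1 : μ < 1)
    (ha : 0 ≤ a_l) (hb : 0 ≤ b_l) : βd ∈ Ico 0 1 :=
  ⟨(betaOf_mem_Ico hμ0 hμ1 ha).1.trans hc.1.1.le, hc.1.2.trans (betaOf_mem_Ico hμ0 hμ1 hb).2⟩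

theorem Ioo_subset_Ioo_zero_one (hc : IsCrossingBelief fh fl a_h a_l b_l b_h μ s βd)
    (hc' : IsCrossingBelief fh fl a_h a_l b_l b_h μ s' βd') (hμ0 : 0 < μ) (hμ1 : μ < 1)
    (ha : 0 ≤ a_l) (hb : 0 ≤ b_l) : Ioo βd βd' ⊆ Ioo 0 1 :=
  Set.Ioo_subset_Ioo (hc.mem_Ico hμ0 hμ1 ha hb).1 (hc'.mem_Ico hμ0 hμ1 ha hb).2.le

theorem zOf_mem (hc : IsCrossingBelief fh fl a_h a_l b_l b_h μ s βd) (hμ0 : 0 < μ) (hμ1 : μ < 1)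
    (ha : 0 ≤ a_l) (hb : 0 ≤ b_l) : zOf μ βd ∈ Ioo a_l b_l := by
  have hz := zOf_strictMonoOn hμ0 hμ1
  have hβd := hc.mem_Ico hμ0 hμ1 ha hb
  constructor
  · simpa only [zOf_betaOf hμ0 hμ1 ha] using hz (betaOf_mem_Ico hμ0 hμ1 ha) hβd hc.1.1
  · simpa only [zOf_betaOf hμ0 hμ1 hb] using hz hβd (betaOf_mem_Ico hμ0 hμ1 hb) hc.1.2

theorem Ioo_zOf_subset (hc : IsCrossingBelief fh fl a_h a_l b_l b_h μ s βd)
    (hc' : IsCrossingBelief fh fl a_h a_l b_l b_h μ s' βd') (hμ0 : 0 < μ) (hμ1 : μ < 1)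
    (ha : 0 ≤ a_l) (hb : 0 ≤ b_l) : Ioo (zOf μ βd) (zOf μ βd') ⊆ Ioo a_l b_l :=
  Set.Ioo_subset_Ioo (hc.zOf_mem hμ0 hμ1 ha hb).1.le (hc'.zOf_mem hμ0 hμ1 ha hb).2.le

theorem Fs_lt_Fs_of_betaOf (hc : IsCrossingBelief fh fl a_h a_l b_l b_h μ s βd) (hμ0 : 0 < μ)
    (hμ1 : μ < 1) (hah : 0 ≤ a_h) {z : ℝ} (haz : a_h < z) (hzb : (z : EReal) < b_h) :
    (betaOf μ z < βd → Fs fl s z < Fs fh s z) ∧ (βd < betaOf μ z → Fs fh s z < Fs fl s z) := by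
  have hz0 : 0 ≤ z := hah.trans haz.le
  have hzz := zOf_betaOf hμ0 hμ1 hz0
  have hβ := betaOf_mem_Ico hμ0 hμ1 hz0
  have hah' : betaOf μ a_h < betaOf μ z := by
    rw [← (zOf_strictMonoOn hμ0 hμ1).lt_iff_lt (betaOf_mem_Ico hμ0 hμ1 hah) hβ, hzz,
      zOf_betaOf hμ0 hμ1 hah]
    exact haz
  obtain ⟨hlt, -, hgt⟩ := hc.2 _ hah' hβ.2 (hzz.symm ▸ hzb)
  simp only [H, hzz, gt_iff_lt, sub_pos, sub_neg] at hlt hgt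
  exact ⟨hlt, hgt⟩

theorem Fs_lt_Fs_of_lt (hc : IsCrossingBelief fh fl a_h a_l b_l b_h μ s βd) (hμ0 : 0 < μ)
    (hμ1 : μ < 1) (hah : 0 ≤ a_h) (hal : a_h ≤ a_l) (hbb : (b_l : EReal) ≤ b_h) {z : ℝ}
    (hz : z ∈ Ioo a_l b_l) (hzd : z < zOf μ βd) : Fs fl s z < Fs fh s z := by
  have hz0 : 0 ≤ z := hah.trans (hal.trans hz.1.le)
  have hβd := hc.mem_Ico hμ0 hμ1 (hah.trans hal) (hz0.trans hz.2.le)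
  refine (hc.Fs_lt_Fs_of_betaOf hμ0 hμ1 hah (hal.trans_lt hz.1)
    ((EReal.coe_lt_coe_iff.2 hz.2).trans_le hbb)).1 ?_
  rwa [← (zOf_strictMonoOn hμ0 hμ1).lt_iff_lt (betaOf_mem_Ico hμ0 hμ1 hz0) hβd,
    zOf_betaOf hμ0 hμ1 hz0]

theorem Fs_lt_Fs_of_gt (hc : IsCrossingBelief fh fl a_h a_l b_l b_h μ s βd) (hμ0 : 0 < μ)
    (hμ1 : μ < 1) (hah : 0 ≤ a_h) (hal : a_h ≤ a_l) (hbb : (b_l : EReal) ≤ b_h) {z : ℝ}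
    (hz : z ∈ Ioo a_l b_l) (hzd : zOf μ βd < z) : Fs fh s z < Fs fl s z := by
  have hz0 : 0 ≤ z := hah.trans (hal.trans hz.1.le)
  have hβd := hc.mem_Ico hμ0 hμ1 (hah.trans hal) (hz0.trans hz.2.le)
  refine (hc.Fs_lt_Fs_of_betaOf hμ0 hμ1 hah (hal.trans_lt hz.1)
    ((EReal.coe_lt_coe_iff.2 hz.2).trans_le hbb)).2 ?_
  rwa [← (zOf_strictMonoOn hμ0 hμ1).lt_iff_lt hβd (betaOf_mem_Ico hμ0 hμ1 hz0),
    zOf_betaOf hμ0 hμ1 hz0]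

theorem zOf_le {μ' : ℝ} (hc : IsCrossingBelief fh fl a_h a_l b_l b_h μ s βd)
    (hc' : IsCrossingBelief fh fl a_h a_l b_l b_h μ' s βd') (hμ0 : 0 < μ) (hμ1 : μ < 1)
    (hμ0' : 0 < μ') (hμ1' : μ' < 1) (hah : 0 ≤ a_h) (hal : a_h ≤ a_l) (hlb : a_l ≤ b_l)
    (hbb : (b_l : EReal) ≤ b_h) : zOf μ βd ≤ zOf μ' βd' := by
  by_contra! hlt
  have ha : 0 ≤ a_l := hah.trans hal
  have hb : 0 ≤ b_l := ha.trans hlb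
  obtain ⟨m, hm'm, hmm⟩ := exists_between hlt
  have hm : m ∈ Ioo a_l b_l :=
    ⟨(hc'.zOf_mem hμ0' hμ1' ha hb).1.trans hm'm, hmm.trans (hc.zOf_mem hμ0 hμ1 ha hb).2⟩
  have := hc.Fs_lt_Fs_of_lt hμ0 hμ1 hah hal hbb hm hmm
  have := hc'.Fs_lt_Fs_of_gt hμ0' hμ1' hah hal hbb hm hm'm
  linarith

theorem zOf_eq {μ' : ℝ} (hc : IsCrossingBelief fh fl a_h a_l b_l b_h μ s βd)
    (hc' : IsCrossingBelief fh fl a_h a_l b_l b_h μ' s βd') (hμ0 : 0 < μ) (hμ1 : μ < 1)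
    (hμ0' : 0 < μ') (hμ1' : μ' < 1) (hah : 0 ≤ a_h) (hal : a_h ≤ a_l) (hlb : a_l ≤ b_l)
    (hbb : (b_l : EReal) ≤ b_h) : zOf μ βd = zOf μ' βd' :=
  le_antisymm (hc.zOf_le hc' hμ0 hμ1 hμ0' hμ1' hah hal hlb hbb)
    (hc'.zOf_le hc hμ0' hμ1' hμ0 hμ1 hah hal hlb hbb)

end IsCrossingBelief

theorem strictMonoOn_div_of_hasDerivAt {u v u' v' : ℝ → ℝ} {a b : ℝ}
    (hu : ∀ x, HasDerivAt u (u' x) x) (hv : ∀ x, HasDerivAt v (v' x) x)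
    (hv0 : ∀ x ∈ Ioo a b, 0 < v x) (h : ∀ x ∈ Ioo a b, u x * v' x < u' x * v x) :
    StrictMonoOn (fun x => u x / v x) (Ioo a b) := by
  have hd : ∀ x ∈ Ioo a b, HasDerivAt (fun y => u y / v y)
      ((u' x * v x - u x * v' x) / v x ^ 2) x := fun x hx =>
    (hu x).div (hv x) (hv0 x hx).ne'
  refine strictMonoOn_of_deriv_pos (convex_Ioo a b)
    (fun x hx => (hd x hx).continuousAt.continuousWithinAt) fun x hx => ?_
  rw [interior_Ioo] at hx
  rw [(hd x hx).deriv]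
  exact div_pos (by linarith [h x hx]) (pow_pos (hv0 x hx) 2)

namespace Noisier

variable {fh fl : ℝ → ℝ} {a_h a_l b_l : ℝ} {b_h : EReal}

theorem strictMonoOn_Fs_div (hdom : Noisier fh fl a_l b_l) (hh : IsLRExperiment fh a_h b_h)
    (hl : IsLRExperiment fl a_l b_l) (hal : a_h ≤ a_l) (s : Fin 2) :
    StrictMonoOn (fun x => Fs fl s x / Fs fh s x) (Ioo a_l b_l) := by
  refine strictMonoOn_div_of_hasDerivAt (hl.hasDerivAt_Fs s) (hh.hasDerivAt_Fs s)
    (fun x hx => hh.Fs_pos s (hal.trans_lt hx.1)) fun x hx => ?_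
  have hd := (hdom s x hx.1 hx.2).1
  rwa [gt_iff_lt, div_lt_div_iff₀ (hh.Fs_pos s (hal.trans_lt hx.1)) (hl.Fs_pos s hx.1),
    mul_comm (fs fh s x)] at hd

theorem strictAntiOn_one_sub_Fs_div (hdom : Noisier fh fl a_l b_l)
    (hh : IsLRExperiment fh a_h b_h) (hl : IsLRExperiment fl a_l b_l)
    (hbb : (b_l : EReal) ≤ b_h) (s : Fin 2) :
    StrictAntiOn (fun x => (1 - Fs fl s x) / (1 - Fs fh s x)) (Ioo a_l b_l) := by
  have hx0 : ∀ x ∈ Ioo a_l b_l, 0 ≤ x := fun x hx => hl.a_nonneg.trans hx.1.le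
  have hxb : ∀ x ∈ Ioo a_l b_l, (x : EReal) < b_l := fun x hx => EReal.coe_lt_coe_iff.2 hx.2
  have hh1 : ∀ x ∈ Ioo a_l b_l, 0 < 1 - Fs fh s x := fun x hx =>
    sub_pos.2 (hh.Fs_lt_one s (hx0 x hx) ((hxb x hx).trans_le hbb))
  have hl1 : ∀ x ∈ Ioo a_l b_l, 0 < 1 - Fs fl s x := fun x hx =>
    sub_pos.2 (hl.Fs_lt_one s (hx0 x hx) (hxb x hx))
  have hmono := strictMonoOn_div_of_hasDerivAt (fun x => (hl.hasDerivAt_Fs s x).sub_const 1)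
    (fun x => (hh.hasDerivAt_Fs s x).const_sub 1) hh1 fun x hx => ?_
  · refine hmono.neg.congr fun x _ => ?_
    simp only [← neg_div, neg_sub]
  · have hd := (hdom s x hx.1 hx.2).2
    rw [gt_iff_lt, div_lt_div_iff₀ (hh1 x hx) (hl1 x hx)] at hd
    linarith

end Noisier

/-- The bracket of the indifference equation: its left side is `β * repGain p H_{h,1} H_{l,1}`
and its right side `(1 - β) * repGain p (1 - H_{h,0}) (1 - H_{l,0})`. -/
noncomputable def repGain (p A B : ℝ) : ℝ :=
  (1 - A) / (p * (1 - A) + (1 - p) * (1 - B)) - A / (p * A + (1 - p) * B)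

section RepGain

variable {p : ℝ}

theorem one_div_add_mul_lt_of_lt (hp : p ∈ Ioo 0 1) {t t' : ℝ} (ht : 0 ≤ t) (h : t < t') :
    1 / (p + (1 - p) * t') < 1 / (p + (1 - p) * t) :=
  one_div_lt_one_div_of_lt (by nlinarith [hp.1, hp.2]) (by nlinarith [hp.1, hp.2])

theorem repGain_eq {A : ℝ} (B : ℝ) (hA : A ∈ Ioo 0 1) :
    repGain p A B = 1 / (p + (1 - p) * ((1 - B) / (1 - A))) - 1 / (p + (1 - p) * (B / A)) := by
  have h1A : 1 - A ≠ 0 := by linarith [hA.2]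
  have hA0 : A ≠ 0 := hA.1.ne'
  rw [repGain, show p + (1 - p) * ((1 - B) / (1 - A)) = (p * (1 - A) + (1 - p) * (1 - B)) / (1 - A)
    by field_simp, show p + (1 - p) * (B / A) = (p * A + (1 - p) * B) / A by field_simp,
    one_div_div, one_div_div]

theorem repGain_pos (hp : p ∈ Ioo 0 1) {A B : ℝ} (hA : A ∈ Ioo 0 1) (hB : B ∈ Ioo 0 1)
    (hAB : A < B) : 0 < repGain p A B := by
  have hlt : (1 - B) / (1 - A) < B / A := by
    rw [div_lt_div_iff₀ (by linarith [hA.2]) hA.1]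
    nlinarith
  rw [repGain_eq B hA, sub_pos]
  exact one_div_add_mul_lt_of_lt hp (div_nonneg (by linarith [hB.2]) (by linarith [hA.2])) hlt

theorem repGain_lt_repGain (hp : p ∈ Ioo 0 1) {A B A' B' : ℝ} (hA : A ∈ Ioo 0 1)
    (hB : B ∈ Ioo 0 1) (hA' : A' ∈ Ioo 0 1) (hB' : B' ∈ Ioo 0 1)
    (h₁ : (1 - B') / (1 - A') < (1 - B) / (1 - A)) (h₂ : B / A < B' / A') :
    repGain p A B < repGain p A' B' := by
  rw [repGain_eq B hA, repGain_eq B' hA']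
  have := one_div_add_mul_lt_of_lt hp (div_nonneg (by linarith [hB'.2]) (by linarith [hA'.2])) h₁
  have := one_div_add_mul_lt_of_lt hp (div_nonneg hB.1.le hA.1.le) h₂
  linarith

end RepGain

/-- The odds `β / (1 - β)` at which the indifference equation holds when the likelihood-ratio
cutoff is `z`. -/
noncomputable def indiffOdds (fh fl : ℝ → ℝ) (p z : ℝ) : ℝ :=
  repGain p (1 - Fs fh 0 z) (1 - Fs fl 0 z) / repGain p (Fs fh 1 z) (Fs fl 1 z)

theorem odds_eq_indiffOdds {fh fl : ℝ → ℝ} {μ p β : ℝ} (hβ : β < 1)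
    (hpos : 0 < repGain p (Fs fh 1 (zOf μ β)) (Fs fl 1 (zOf μ β)))
    (heq : indiffLHS fh fl μ p β = indiffRHS fh fl μ p β) :
    β / (1 - β) = indiffOdds fh fl p (zOf μ β) := by
  have hR : indiffRHS fh fl μ p β
      = (1 - β) * repGain p (1 - Fs fh 0 (zOf μ β)) (1 - Fs fl 0 (zOf μ β)) := by
    simp only [indiffRHS, repGain, H, sub_sub_cancel]
  rw [indiffOdds, div_eq_div_iff (sub_pos.2 hβ).ne' hpos.ne']
  exact (heq.trans hR).trans (mul_comm _ _)

theorem indiffOdds_strictAntiOn {fh fl : ℝ → ℝ} {a_h a_l b_l : ℝ} {b_h : EReal} {p : ℝ}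
    (hdom : Noisier fh fl a_l b_l) (hh : IsLRExperiment fh a_h b_h)
    (hl : IsLRExperiment fl a_l b_l) (hal : a_h ≤ a_l) (hbb : (b_l : EReal) ≤ b_h)
    (hp : p ∈ Ioo 0 1) {S : Set ℝ} (hS : S ⊆ Ioo a_l b_l)
    (h₁ : ∀ z ∈ S, Fs fh 1 z < Fs fl 1 z) (h₀ : ∀ z ∈ S, Fs fl 0 z < Fs fh 0 z) :
    StrictAntiOn (indiffOdds fh fl p) S := by
  have hFh : ∀ s, ∀ z ∈ S, Fs fh s z ∈ Ioo 0 1 := fun s z hz => hh.Fs_mem_Ioo s hal hbb (hS hz)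
  have hFl : ∀ s, ∀ z ∈ S, Fs fl s z ∈ Ioo 0 1 := fun s z hz =>
    hl.Fs_mem_Ioo s le_rfl le_rfl (hS hz)
  have hmono := fun s => (hdom.strictMonoOn_Fs_div hh hl hal s).mono hS
  have hanti := fun s => (hdom.strictAntiOn_one_sub_Fs_div hh hl hbb s).mono hS
  intro z hz z' hz' hlt
  have hgain₁ : repGain p (Fs fh 1 z) (Fs fl 1 z) < repGain p (Fs fh 1 z') (Fs fl 1 z') :=
    repGain_lt_repGain hp (hFh 1 z hz) (hFl 1 z hz) (hFh 1 z' hz') (hFl 1 z' hz')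
      (hanti 1 hz hz' hlt) (hmono 1 hz hz' hlt)
  have hgain₀ : repGain p (1 - Fs fh 0 z') (1 - Fs fl 0 z')
      < repGain p (1 - Fs fh 0 z) (1 - Fs fl 0 z) := by
    refine repGain_lt_repGain hp (Ioo.one_sub_mem (hFh 0 z' hz')) (Ioo.one_sub_mem (hFl 0 z' hz'))
      (Ioo.one_sub_mem (hFh 0 z hz)) (Ioo.one_sub_mem (hFl 0 z hz)) ?_ (hanti 0 hz hz' hlt)
    simpa only [sub_sub_cancel] using hmono 0 hz hz' hlt
  have hpos₁ := repGain_pos hp (hFh 1 z hz) (hFl 1 z hz) (h₁ z hz)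
  have hpos₀ := repGain_pos hp (Ioo.one_sub_mem (hFh 0 z hz)) (Ioo.one_sub_mem (hFl 0 z hz))
    (by linarith [h₀ z hz])
  exact div_lt_div₀ hgain₀ hgain₁.le hpos₀.le hpos₁

section Equilibrium

variable {fh fl : ℝ → ℝ} {a_h a_l b_l : ℝ} {b_h : EReal} {p μ βd₁ βd₀ : ℝ}

theorem indiffOdds_strictAntiOn_Ioo_zOf (hdom : Noisier fh fl a_l b_l)
    (hh : IsLRExperiment fh a_h b_h) (hl : IsLRExperiment fl a_l b_l) (hal : a_h ≤ a_l)
    (hbb : (b_l : EReal) ≤ b_h) (hp : p ∈ Ioo 0 1) (hμ0 : 0 < μ) (hμ1 : μ < 1)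
    (hc₁ : IsCrossingBelief fh fl a_h a_l b_l b_h μ 1 βd₁)
    (hc₀ : IsCrossingBelief fh fl a_h a_l b_l b_h μ 0 βd₀) :
    StrictAntiOn (indiffOdds fh fl p) (Ioo (zOf μ βd₁) (zOf μ βd₀)) := by
  have ha := hl.a_nonneg
  have hb : 0 ≤ b_l := ha.trans (EReal.coe_le_coe_iff.1 hl.a_lt_b.le)
  have hS := hc₁.Ioo_zOf_subset hc₀ hμ0 hμ1 ha hb
  exact indiffOdds_strictAntiOn hdom hh hl hal hbb hp hS
    (fun z hz => hc₁.Fs_lt_Fs_of_gt hμ0 hμ1 hh.a_nonneg hal hbb (hS hz) hz.1)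
    (fun z hz => hc₀.Fs_lt_Fs_of_lt hμ0 hμ1 hh.a_nonneg hal hbb (hS hz) hz.2)

theorem odds_eq_indiffOdds_of_mem_Ioo (hh : IsLRExperiment fh a_h b_h)
    (hl : IsLRExperiment fl a_l b_l) (hal : a_h ≤ a_l) (hbb : (b_l : EReal) ≤ b_h)
    (hp : p ∈ Ioo 0 1) (hμ0 : 0 < μ) (hμ1 : μ < 1)
    (hc₁ : IsCrossingBelief fh fl a_h a_l b_l b_h μ 1 βd₁)
    (hc₀ : IsCrossingBelief fh fl a_h a_l b_l b_h μ 0 βd₀) {β : ℝ} (hβ : β ∈ Ioo βd₁ βd₀)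
    (heq : indiffLHS fh fl μ p β = indiffRHS fh fl μ p β) :
    zOf μ β ∈ Ioo (zOf μ βd₁) (zOf μ βd₀) ∧ β / (1 - β) = indiffOdds fh fl p (zOf μ β) := by
  have ha := hl.a_nonneg
  have hb : 0 ≤ b_l := ha.trans (EReal.coe_le_coe_iff.1 hl.a_lt_b.le)
  have hw := zOf_mem_Ioo hμ0 hμ1 (hc₁.mem_Ico hμ0 hμ1 ha hb) (hc₀.mem_Ico hμ0 hμ1 ha hb) hβ
  have hS := hc₁.Ioo_zOf_subset hc₀ hμ0 hμ1 ha hb hw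
  refine ⟨hw, odds_eq_indiffOdds (hc₁.Ioo_subset_Ioo_zero_one hc₀ hμ0 hμ1 ha hb hβ).2 ?_ heq⟩
  exact repGain_pos hp (hh.Fs_mem_Ioo 1 hal hbb hS) (hl.Fs_mem_Ioo 1 le_rfl le_rfl hS)
    (hc₁.Fs_lt_Fs_of_gt hμ0 hμ1 hh.a_nonneg hal hbb hS hw.1)

end Equilibrium

theorem stmt_5_general (fh fl : ℝ → ℝ) (a_h a_l b_l : ℝ) (b_h : EReal)
    (hh : IsLRExperiment fh a_h b_h) (hl : IsLRExperiment fl a_l (b_l : EReal))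
    (hab : a_h < a_l) (hbb : (b_l : EReal) < b_h)
    (hdom : Noisier fh fl a_l b_l)
    (p : ℝ) (hp : p ∈ Set.Ioo (0:ℝ) 1)
    (μ μ' : ℝ) (hμ : μ ∈ Set.Ico (1/2 : ℝ) 1) (hμ' : μ' ∈ Set.Ico (1/2 : ℝ) 1)
    (hμμ' : μ < μ')
    (βd0 βd1 : ℝ)
    (hc0 : IsCrossingBelief fh fl a_h a_l b_l b_h μ 0 βd0)
    (hc1 : IsCrossingBelief fh fl a_h a_l b_l b_h μ 1 βd1)
    (βd0' βd1' : ℝ)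
    (hc0' : IsCrossingBelief fh fl a_h a_l b_l b_h μ' 0 βd0')
    (hc1' : IsCrossingBelief fh fl a_h a_l b_l b_h μ' 1 βd1')
    (βμ βμ' : ℝ)
    (hβμ : βμ ∈ Set.Ioo βd1 βd0)
    (heq : indiffLHS fh fl μ p βμ = indiffRHS fh fl μ p βμ)
    (hβμ' : βμ' ∈ Set.Ioo βd1' βd0')
    (heq' : indiffLHS fh fl μ' p βμ' = indiffRHS fh fl μ' p βμ') :
    βμ < βμ' := by
  obtain ⟨hμ0, hμ1⟩ : 0 < μ ∧ μ < 1 := ⟨by linarith [hμ.1], hμ.2⟩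
  obtain ⟨hμ0', hμ1'⟩ : 0 < μ' ∧ μ' < 1 := ⟨by linarith [hμ'.1], hμ'.2⟩
  have ha := hl.a_nonneg
  have hlb : a_l ≤ b_l := EReal.coe_le_coe_iff.1 hl.a_lt_b.le
  have hb : 0 ≤ b_l := ha.trans hlb
  have hanti := indiffOdds_strictAntiOn_Ioo_zOf hdom hh hl hab.le hbb.le hp hμ0 hμ1 hc1 hc0
  obtain ⟨hw, hodds⟩ := odds_eq_indiffOdds_of_mem_Ioo hh hl hab.le hbb.le hp hμ0 hμ1 hc1 hc0 hβμ heq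
  obtain ⟨hw', hodds'⟩ :=
    odds_eq_indiffOdds_of_mem_Ioo hh hl hab.le hbb.le hp hμ0' hμ1' hc1' hc0' hβμ' heq'
  rw [← hc1.zOf_eq hc1' hμ0 hμ1 hμ0' hμ1' hh.a_nonneg hab.le hlb hbb.le,
    ← hc0.zOf_eq hc0' hμ0 hμ1 hμ0' hμ1' hh.a_nonneg hab.le hlb hbb.le] at hw'
  have hβ := hc1.Ioo_subset_Ioo_zero_one hc0 hμ0 hμ1 ha hb hβμ
  have hβ' := hc1'.Ioo_subset_Ioo_zero_one hc0' hμ0' hμ1' ha hb hβμ'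
  by_contra! hle
  have hww : zOf μ' βμ' < zOf μ βμ :=
    ((zOf_strictMonoOn hμ0' hμ1').monotoneOn (Ioo_subset_Ico_self hβ') (Ioo_subset_Ico_self hβ)
      hle).trans_lt (zOf_lt_zOf_of_lt hμ0 hμμ' hβ)
  have hlt : βμ / (1 - βμ) < βμ' / (1 - βμ') := hodds ▸ hodds' ▸ hanti hw' hw hww
  have : βμ' / (1 - βμ') ≤ βμ / (1 - βμ) := div_le_div₀ hβ.1.le hle (sub_pos.2 hβ.2) (by linarith)
  linarith

/-- The informative-equilibrium belief cutoff is strictly increasing in the prior state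
belief: if `μ < μ′` and `β_μ`, `β_{μ′}` are the unique solutions of the indifference
equation at `μ` and `μ′` (each lying between the respective crossing beliefs), then
`β_μ < β_{μ′}`. -/
theorem stmt_5 (fh fl : ℝ → ℝ) (a_h a_l b_l : ℝ) (b_h : EReal)
    (hh : IsLRExperiment fh a_h b_h) (hl : IsLRExperiment fl a_l (b_l : EReal))
    (hab : a_h < a_l) (hbb : (b_l : EReal) < b_h)
    (hdom : Noisier fh fl a_l b_l)
    (p : ℝ) (hp : p ∈ Set.Ioo (0:ℝ) 1)
    (μ μ' : ℝ) (hμ : μ ∈ Set.Ico (1/2 : ℝ) 1) (hμ' : μ' ∈ Set.Ico (1/2 : ℝ) 1)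
    (hμμ' : μ < μ')
    (βd0 βd1 : ℝ)
    (hc0 : IsCrossingBelief fh fl a_h a_l b_l b_h μ 0 βd0)
    (hc1 : IsCrossingBelief fh fl a_h a_l b_l b_h μ 1 βd1)
    (hlt : βd1 < βd0)
    (βd0' βd1' : ℝ)
    (hc0' : IsCrossingBelief fh fl a_h a_l b_l b_h μ' 0 βd0')
    (hc1' : IsCrossingBelief fh fl a_h a_l b_l b_h μ' 1 βd1')
    (hlt' : βd1' < βd0')
    (βμ βμ' : ℝ)
    (hβμ : βμ ∈ Set.Ioo βd1 βd0)
    (heq : indiffLHS fh fl μ p βμ = indiffRHS fh fl μ p βμ)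
    (hβμ' : βμ' ∈ Set.Ioo βd1' βd0')
    (heq' : indiffLHS fh fl μ' p βμ' = indiffRHS fh fl μ' p βμ') :
    βμ < βμ' :=
  stmt_5_general fh fl a_h a_l b_l b_h hh hl hab hbb hdom p hp μ μ' hμ hμ' hμμ' βd0 βd1 hc0 hc1 βd0'
    βd1' hc0' hc1' βμ βμ' hβμ heq hβμ' heq'
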